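/- Let φ ∈ Φ be strictly convex, let i be an integer with 0 ≤ i < n, let ℳ ⊆ 𝒦ⁿ and let K, L ∈ ℳ. If A_{φ,i}(Q,K) = A_{φ,i}(Q,L) for all Q ∈ ℳ, then K and L have the same half-width function, i.e. b(K,u) = b(L,u) for all u ∈ S^{n−1}. -/

import Mathlib

open MeasureTheory Metric Filter Set
open scoped RealInnerProductSpace ENNReal

noncomputable section

abbrev Euc (n : ℕ) := EuclideanSpace ℝ (Fin n)

/-- Support function `h(K,x) = sup {⟨x,y⟩ : y ∈ K}`. -/
def suppFn {n : ℕ} (K : Set (Euc n)) (x : Euc n) : ℝ :=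
  sSup ((fun y => ⟪x, y⟫) '' K)

/-- Half width of `K` in direction `u`: `b(K,u) = (h(K,u)+h(K,-u))/2`. -/
def halfWidth {n : ℕ} (K : Set (Euc n)) (u : Euc n) : ℝ :=
  (suppFn K u + suppFn K (-u)) / 2

/-- A convex body containing the origin in its interior. -/
def IsConvexBody {n : ℕ} (K : Set (Euc n)) : Prop :=
  IsCompact K ∧ Convex ℝ K ∧ (0 : Euc n) ∈ interior K

/-- Spherical Lebesgue measure on the unit sphere. -/
def sphMeasure (n : ℕ) : Measure (sphere (0 : Euc n) 1) :=
  (volume : Measure (Euc n)).toSphere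

/-- Width integral `A_i(K) = (1/n) ∫_{S^{n-1}} b(K,u)^{n-i} dS(u)`. -/
def widthIntegral (n i : ℕ) (K : Set (Euc n)) : ℝ :=
  (1 / (n : ℝ)) * ∫ u : sphere (0 : Euc n) 1,
    halfWidth K (u : Euc n) ^ ((n : ℝ) - i) ∂(sphMeasure n)

/-- `K` and `L` have similar width: `b(L,·) = λ b(K,·)` on the sphere for some `λ > 0`. -/
def SimilarWidth {n : ℕ} (K L : Set (Euc n)) : Prop :=
  ∃ lam : ℝ, 0 < lam ∧ ∀ u : Euc n, ‖u‖ = 1 → halfWidth L u = lam * halfWidth K u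

/-- The class `Φ`: convex, strictly decreasing `φ : (0,∞) → (0,∞)` with
`φ(0⁺)=∞`, `φ(∞)=0`, `φ(1)=1`. -/
structure IsOrliczPhi (φ : ℝ → ℝ) : Prop where
  convexOn : ConvexOn ℝ (Set.Ioi (0 : ℝ)) φ
  strictAntiOn : StrictAntiOn φ (Set.Ioi (0 : ℝ))
  pos : ∀ t : ℝ, 0 < t → 0 < φ t
  tendsto_zero : Filter.Tendsto φ (nhdsWithin 0 (Set.Ioi 0)) Filter.atTop
  tendsto_atTop : Filter.Tendsto φ Filter.atTop (nhds 0)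
  one : φ 1 = 1

/-- Orlicz mixed width integral
`A_{φ,i}(K,L) = (1/n) ∫ φ(b(L,u)/b(K,u)) b(K,u)^{n-i} dS(u)`. -/
def orliczMixedWidthIntegral (n i : ℕ) (φ : ℝ → ℝ) (K L : Set (Euc n)) : ℝ :=
  (1 / (n : ℝ)) * ∫ u : sphere (0 : Euc n) 1,
    φ (halfWidth L (u : Euc n) / halfWidth K (u : Euc n)) *
      halfWidth K (u : Euc n) ^ ((n : ℝ) - i) ∂(sphMeasure n)

/-! ### Auxiliary lemmas -/

/-- Strict supporting line at 1 for a strictly convex, strictly decreasing function. -/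
lemma exists_support_slope {φ : ℝ → ℝ} (hconv : ConvexOn ℝ (Set.Ioi 0) φ)
    (hstrict : StrictConvexOn ℝ (Set.Ioi 0) φ) (hanti : StrictAntiOn φ (Set.Ioi 0))
    (hone : φ 1 = 1) :
    ∃ c : ℝ, c < 0 ∧ (∀ t : ℝ, 0 < t → 1 + c * (t - 1) ≤ φ t) ∧
      (∀ t : ℝ, 0 < t → t ≠ 1 → 1 + c * (t - 1) < φ t) := by
  set sl : ℝ → ℝ := fun t => (φ t - 1) / (t - 1) with hsl
  have h1 : (1 : ℝ) ∈ Set.Ioi (0 : ℝ) := by norm_num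
  have hmono : ∀ x y : ℝ, 0 < x → 0 < y → x ≠ 1 → y ≠ 1 → x ≤ y → sl x ≤ sl y := by
    intro x y hx hy hx1 hy1 hxy
    have := hconv.secant_mono h1 hx hy hx1 hy1 hxy
    simpa [hsl, hone] using this
  have hsmono : ∀ x y : ℝ, 0 < x → 0 < y → x ≠ 1 → y ≠ 1 → x < y → sl x < sl y := by
    intro x y hx hy hx1 hy1 hxy
    have := hstrict.secant_strict_mono h1 hx hy hx1 hy1 hxy
    simpa [hsl, hone] using this
  have hbdd : BddBelow (sl '' Set.Ioi 1) := by
    refine ⟨sl (1/2), ?_⟩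
    rintro _ ⟨t, ht, rfl⟩
    exact hmono (1/2) t (by norm_num) (lt_trans one_pos ht) (by norm_num)
      (ne_of_gt ht) (by linarith [Set.mem_Ioi.mp ht])
  have hne : (sl '' Set.Ioi 1).Nonempty := ⟨sl 2, ⟨2, by norm_num, rfl⟩⟩
  set c : ℝ := sInf (sl '' Set.Ioi 1) with hc
  have hcle : ∀ t : ℝ, 1 < t → c ≤ sl t := fun t ht => csInf_le hbdd ⟨t, ht, rfl⟩
  have hlec : ∀ t : ℝ, 0 < t → t < 1 → sl t ≤ c := by
    intro t ht ht1
    refine le_csInf hne ?_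
    rintro _ ⟨s, hs, rfl⟩
    exact hmono t s ht (lt_trans one_pos hs) (ne_of_lt ht1) (ne_of_gt hs)
      (by linarith [Set.mem_Ioi.mp hs])
  have hcneg : c < 0 := by
    have h2 : c ≤ sl 2 := hcle 2 (by norm_num)
    have : φ 2 < 1 := by simpa [hone] using hanti h1 (by norm_num : (2:ℝ) ∈ Set.Ioi 0) one_lt_two
    have : sl 2 < 0 := by simp only [hsl]; norm_num; linarith
    linarith
  refine ⟨c, hcneg, ?_, ?_⟩
  · intro t ht
    rcases lt_trichotomy t 1 with h | h | h
    · have := hlec t ht h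
      rw [hsl, div_le_iff_of_neg (by linarith : t - 1 < 0)] at this
      linarith
    · simp [h, hone]
    · have := hcle t h
      rw [hsl, le_div_iff₀ (by linarith : 0 < t - 1)] at this
      linarith
  · intro t ht ht1
    rcases lt_trichotomy t 1 with h | h | h
    · have hmid : sl t < sl ((t+1)/2) := hsmono t ((t+1)/2) ht (by linarith) (ne_of_lt h)
        (by intro hh; nlinarith [hh]) (by linarith)
      have := hlec ((t+1)/2) (by linarith) (by linarith)
      have hlt : sl t < c := lt_of_lt_of_le hmid this
      rw [hsl, div_lt_iff_of_neg (by linarith : t - 1 < 0)] at hlt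
      linarith
    · exact absurd h ht1
    · have hmid : sl ((t+1)/2) < sl t := hsmono ((t+1)/2) t (by linarith) ht
        (by intro hh; nlinarith [hh]) (ne_of_gt h) (by linarith)
      have := hcle ((t+1)/2) (by linarith)
      have hlt : c < sl t := lt_of_le_of_lt this hmid
      rw [hsl, lt_div_iff₀ (by linarith : 0 < t - 1)] at hlt
      linarith

lemma IsConvexBody.zero_mem {n : ℕ} {K : Set (Euc n)} (hK : IsConvexBody K) :
    ((0 : Euc n)) ∈ K := interior_subset hK.2.2

lemma inner_cont {n : ℕ} (x : Euc n) : Continuous (fun y : Euc n => ⟪x, y⟫) :=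
  continuous_const.inner continuous_id

lemma img_ne {n : ℕ} {K : Set (Euc n)} (hK : IsConvexBody K) (x : Euc n) :
    ((fun y => ⟪x, y⟫) '' K).Nonempty := ⟨_, Set.mem_image_of_mem _ hK.zero_mem⟩

lemma img_bdd {n : ℕ} {K : Set (Euc n)} (hK : IsConvexBody K) (x : Euc n) :
    BddAbove ((fun y => ⟪x, y⟫) '' K) :=
  (hK.1.image (inner_cont x)).bddAbove

lemma le_suppFn {n : ℕ} {K : Set (Euc n)} (hK : IsConvexBody K) {x y : Euc n} (hy : y ∈ K) :
    ⟪x, y⟫ ≤ suppFn K x := le_csSup (img_bdd hK x) (Set.mem_image_of_mem _ hy)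

lemma suppFn_le {n : ℕ} {K : Set (Euc n)} (hK : IsConvexBody K) {x : Euc n} {a : ℝ}
    (ha : ∀ y ∈ K, ⟪x, y⟫ ≤ a) : suppFn K x ≤ a := by
  refine csSup_le (img_ne hK x) ?_
  rintro _ ⟨y, hy, rfl⟩; exact ha y hy

lemma halfWidth_pos {n : ℕ} {K : Set (Euc n)} (hK : IsConvexBody K) {u : Euc n}
    (hu : ‖u‖ = 1) : 0 < halfWidth K u := by
  obtain ⟨ε, hε, hball⟩ := Metric.mem_nhds_iff.mp (mem_interior_iff_mem_nhds.mp hK.2.2)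
  have key : ∀ v : Euc n, ‖v‖ = 1 → ε / 2 ≤ suppFn K v := by
    intro v hv
    have hmem : (ε/2) • v ∈ K := by
      apply hball
      rw [mem_ball_zero_iff, norm_smul, hv, mul_one, Real.norm_eq_abs,
        abs_of_pos (half_pos hε)]
      linarith
    have := le_suppFn hK (x := v) hmem
    rwa [real_inner_smul_right, real_inner_self_eq_norm_sq, hv, one_pow, mul_one] at this
  have h1 := key u hu
  have h2 := key (-u) (by simpa using hu)
  unfold halfWidth; linarith

lemma suppFn_continuous {n : ℕ} {K : Set (Euc n)} (hK : IsConvexBody K) :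
    Continuous (suppFn K) := by
  obtain ⟨R, hR⟩ := isBounded_iff_forall_norm_le.mp hK.1.isBounded
  have hR0 : 0 ≤ R := le_trans (norm_nonneg _) (hR 0 hK.zero_mem)
  have key : ∀ x z : Euc n, suppFn K x ≤ suppFn K z + R * ‖x - z‖ := by
    intro x z
    refine suppFn_le hK ?_
    intro y hy
    have h1 : ⟪x, y⟫ = ⟪z, y⟫ + ⟪x - z, y⟫ := by rw [← inner_add_left, add_sub_cancel]
    have h2 : ⟪x - z, y⟫ ≤ ‖x - z‖ * ‖y‖ := real_inner_le_norm _ _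
    have h3 : ‖x - z‖ * ‖y‖ ≤ ‖x - z‖ * R :=
      mul_le_mul_of_nonneg_left (hR y hy) (norm_nonneg _)
    have h4 := le_suppFn hK (x := z) hy
    rw [h1]; nlinarith
  have lip : LipschitzWith (Real.toNNReal R) (suppFn K) := by
    refine LipschitzWith.of_dist_le_mul ?_
    intro x z
    rw [Real.dist_eq, dist_eq_norm, abs_sub_le_iff]
    constructor
    · have := key x z
      have h5 : suppFn K x - suppFn K z ≤ R * ‖x - z‖ := by linarith
      simpa [Real.coe_toNNReal R hR0] using h5
    · have := key z x
      have h5 : suppFn K z - suppFn K x ≤ R * ‖z - x‖ := by linarith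
      rw [norm_sub_rev] at h5
      simpa [Real.coe_toNNReal R hR0] using h5
  exact lip.continuous

lemma halfWidth_continuous {n : ℕ} {K : Set (Euc n)} (hK : IsConvexBody K) :
    Continuous (halfWidth K) := by
  unfold halfWidth
  exact ((suppFn_continuous hK).add ((suppFn_continuous hK).comp continuous_neg)).div_const 2

instance (n : ℕ) : IsFiniteMeasure (sphMeasure n) := by
  unfold sphMeasure; infer_instance

lemma integrable_cont {n : ℕ} {f : sphere (0 : Euc n) 1 → ℝ} (hf : Continuous f) :
    Integrable f (sphMeasure n) := by
  have hcs : HasCompactSupport f :=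
    IsCompact.of_isClosed_subset isCompact_univ (isClosed_tsupport f) (Set.subset_univ _)
  exact hf.integrable_of_hasCompactSupport hcs

lemma sphMeasure_pos {n : ℕ} (hn : 2 ≤ n) {s : Set (sphere (0 : Euc n) 1)}
    (hs : IsOpen s) (hne : s.Nonempty) : 0 < sphMeasure n s := by
  rw [sphMeasure, Measure.toSphere_apply' _ hs.measurableSet]
  have hr1 : (1 : ℝ) ∈ Set.Ioi (0:ℝ) := Set.mem_Ioi.mpr one_pos
  have key := (volume : Measure (Euc n)).toSphere_apply_aux s ⟨1, hr1⟩
  refine ENNReal.mul_pos ?_ ?_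
  · simp only [ne_eq, Nat.cast_eq_zero]
    have : Module.finrank ℝ (Euc n) = n := finrank_euclideanSpace_fin
    omega
  · rw [← key]
    set V : Set ({0}ᶜ : Set (Euc n)) :=
      homeomorphUnitSphereProd (Euc n) ⁻¹' (s ×ˢ Iio ⟨1, hr1⟩) with hV
    have hVopen : IsOpen V := by
      apply (homeomorphUnitSphereProd (Euc n)).continuous.isOpen_preimage
      apply hs.prod
      have : (Iio (⟨1, hr1⟩ : Set.Ioi (0:ℝ))) = Subtype.val ⁻¹' (Iio (1 : ℝ)) := by
        ext x; simp [← Subtype.coe_lt_coe]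
      rw [this]
      exact isOpen_Iio.preimage continuous_subtype_val
    have hTopen : IsOpen (Subtype.val '' V) :=
      (isOpen_compl_singleton).isOpenMap_subtype_val V hVopen
    have hTne : (Subtype.val '' V).Nonempty := by
      obtain ⟨v, hv⟩ := hne
      set e := (homeomorphUnitSphereProd (Euc n)).symm (v, ⟨1/2, by norm_num⟩) with he
      refine ⟨(e : Euc n), e, ?_, rfl⟩
      rw [hV, Set.mem_preimage, he, Homeomorph.apply_symm_apply]
      exact ⟨hv, by norm_num [Set.mem_Iio, Subtype.mk_lt_mk]⟩
    exact (hTopen.measure_pos (volume : Measure (Euc n)) hTne).ne'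

lemma zero_of_integral_zero {n : ℕ} (hn : 2 ≤ n) {f : sphere (0 : Euc n) 1 → ℝ}
    (hc : Continuous f) (hnn : ∀ u, 0 ≤ f u)
    (hint : ∫ u, f u ∂(sphMeasure n) = 0) : ∀ u, f u = 0 := by
  have hae : f =ᵐ[sphMeasure n] 0 :=
    (integral_eq_zero_iff_of_nonneg hnn (integrable_cont hc)).mp hint
  intro u
  by_contra hu
  have hupos : 0 < f u := lt_of_le_of_ne (hnn u) (Ne.symm hu)
  have hU : IsOpen (f ⁻¹' Set.Ioi 0) := isOpen_Ioi.preimage hc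
  have hUne : (f ⁻¹' Set.Ioi 0).Nonempty := ⟨u, hupos⟩
  have hpos := sphMeasure_pos hn hU hUne
  have hnull : sphMeasure n {x | f x ≠ 0} = 0 := by
    simpa [Filter.EventuallyEq, ae_iff] using hae
  have : sphMeasure n (f ⁻¹' Set.Ioi 0) = 0 := by
    refine measure_mono_null ?_ hnull
    intro x hx; exact ne_of_gt hx
  simp [this] at hpos

/-- One-sided step: `0 ≤ ∫ (G-F) F^(p-1)` plus the integral identity for the defect. -/
lemma stepA {n : ℕ} {p : ℝ} (hp1 : 1 ≤ p) {φ : ℝ → ℝ}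
    (hφc : ContinuousOn φ (Set.Ioi 0)) {c : ℝ} (hc : c < 0)
    (hsupp : ∀ t : ℝ, 0 < t → 1 + c * (t - 1) ≤ φ t)
    {F G : sphere (0 : Euc n) 1 → ℝ}
    (hFc : Continuous F) (hGc : Continuous G)
    (hFpos : ∀ u, 0 < F u) (hGpos : ∀ u, 0 < G u)
    (e1 : ∫ u, φ (G u / F u) * F u ^ p ∂(sphMeasure n)
        = ∫ u, F u ^ p ∂(sphMeasure n)) :
    0 ≤ ∫ u, (G u - F u) * F u ^ (p-1) ∂(sphMeasure n) ∧
    ∫ u, ((φ (G u / F u) - 1) * F u ^ p - c * ((G u - F u) * F u ^ (p-1))) ∂(sphMeasure n)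
      = -(c * ∫ u, (G u - F u) * F u ^ (p-1) ∂(sphMeasure n)) := by
  have hφGF : Continuous fun u => φ (G u / F u) := by
    refine hφc.comp_continuous (hGc.div hFc fun u => (hFpos u).ne') ?_
    exact fun u => Set.mem_Ioi.mpr (div_pos (hGpos u) (hFpos u))
  have hFp : Continuous fun u => F u ^ p := hFc.rpow_const fun u => Or.inl (hFpos u).ne'
  have hFp1 : Continuous fun u => (G u - F u) * F u ^ (p-1) :=
    (hGc.sub hFc).mul (hFc.rpow_const fun u => Or.inl (hFpos u).ne')
  have hint1 : Integrable (fun u => (φ (G u / F u) - 1) * F u ^ p) (sphMeasure n) :=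
    integrable_cont ((hφGF.sub continuous_const).mul hFp)
  have hint2 : Integrable (fun u => (G u - F u) * F u ^ (p-1)) (sphMeasure n) :=
    integrable_cont hFp1
  have hid : ∀ u, (G u - F u) * F u ^ (p-1) = (G u / F u - 1) * F u ^ p := by
    intro u
    have hne := (hFpos u).ne'
    have h := Real.rpow_add_one hne (p-1)
    rw [show p - 1 + 1 = p from by ring] at h
    rw [h]
    field_simp
  have hkey : ∫ u, ((φ (G u / F u) - 1) * F u ^ p - c * ((G u - F u) * F u ^ (p-1)))
      ∂(sphMeasure n)
      = -(c * ∫ u, (G u - F u) * F u ^ (p-1) ∂(sphMeasure n)) := by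
    rw [integral_sub hint1 (hint2.const_mul c), MeasureTheory.integral_const_mul]
    have : ∫ u, (φ (G u / F u) - 1) * F u ^ p ∂(sphMeasure n) = 0 := by
      have hrw : (fun u => (φ (G u / F u) - 1) * F u ^ p)
          = fun u => φ (G u / F u) * F u ^ p - F u ^ p := by funext u; ring
      rw [hrw, integral_sub (integrable_cont (f := fun u => φ (G u / F u) * F u ^ p) (hφGF.mul hFp)) (integrable_cont hFp), e1,
        sub_self]
    rw [this]; ring
  have hD1 : ∀ u, 0 ≤ (φ (G u / F u) - 1) * F u ^ p - c * ((G u - F u) * F u ^ (p-1)) := by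
    intro u
    have ht : 0 < G u / F u := div_pos (hGpos u) (hFpos u)
    have h1 := hsupp _ ht
    have h2 : 0 < F u ^ p := Real.rpow_pos_of_pos (hFpos u) p
    rw [hid u]
    nlinarith
  have hnn : 0 ≤ ∫ u, ((φ (G u / F u) - 1) * F u ^ p - c * ((G u - F u) * F u ^ (p-1)))
      ∂(sphMeasure n) := integral_nonneg hD1
  refine ⟨?_, hkey⟩
  rw [hkey] at hnn
  nlinarith

lemma main_aux {n : ℕ} (hn : 2 ≤ n) {p : ℝ} (hp1 : 1 ≤ p) {φ : ℝ → ℝ}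
    (hφc : ContinuousOn φ (Set.Ioi 0)) {c : ℝ} (hc : c < 0)
    (hsupp : ∀ t : ℝ, 0 < t → 1 + c * (t - 1) ≤ φ t)
    (hsupp' : ∀ t : ℝ, 0 < t → t ≠ 1 → 1 + c * (t - 1) < φ t)
    {F G : sphere (0 : Euc n) 1 → ℝ}
    (hFc : Continuous F) (hGc : Continuous G)
    (hFpos : ∀ u, 0 < F u) (hGpos : ∀ u, 0 < G u)
    (e1 : ∫ u, φ (G u / F u) * F u ^ p ∂(sphMeasure n)
        = ∫ u, F u ^ p ∂(sphMeasure n))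
    (e2 : ∫ u, φ (F u / G u) * G u ^ p ∂(sphMeasure n)
        = ∫ u, G u ^ p ∂(sphMeasure n)) :
    ∀ u, F u = G u := by
  obtain ⟨hA, hkeyA⟩ := stepA hp1 hφc hc hsupp hFc hGc hFpos hGpos e1
  obtain ⟨hB, _⟩ := stepA hp1 hφc hc hsupp hGc hFc hGpos hFpos e2
  set A := ∫ u, (G u - F u) * F u ^ (p-1) ∂(sphMeasure n) with hAdef
  set B := ∫ u, (F u - G u) * G u ^ (p-1) ∂(sphMeasure n) with hBdef
  have hintA : Integrable (fun u => (G u - F u) * F u ^ (p-1)) (sphMeasure n) :=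
    integrable_cont ((hGc.sub hFc).mul (hFc.rpow_const fun u => Or.inl (hFpos u).ne'))
  have hintB : Integrable (fun u => (F u - G u) * G u ^ (p-1)) (sphMeasure n) :=
    integrable_cont ((hFc.sub hGc).mul (hGc.rpow_const fun u => Or.inl (hGpos u).ne'))
  have hAB : A + B ≤ 0 := by
    rw [hAdef, hBdef, ← integral_add hintA hintB]
    refine integral_nonpos ?_
    intro u
    simp only [Pi.zero_apply]
    rcases le_total (F u) (G u) with hle | hle
    · have := Real.rpow_le_rpow (hFpos u).le hle (by linarith : (0:ℝ) ≤ p - 1)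
      nlinarith [Real.rpow_nonneg (hFpos u).le (p-1), Real.rpow_nonneg (hGpos u).le (p-1)]
    · have := Real.rpow_le_rpow (hGpos u).le hle (by linarith : (0:ℝ) ≤ p - 1)
      nlinarith [Real.rpow_nonneg (hFpos u).le (p-1), Real.rpow_nonneg (hGpos u).le (p-1)]
  have hA0 : A = 0 := le_antisymm (by linarith) hA
  have hD1zero : ∫ u, ((φ (G u / F u) - 1) * F u ^ p - c * ((G u - F u) * F u ^ (p-1)))
      ∂(sphMeasure n) = 0 := by rw [hkeyA, hA0]; ring
  have hφGF : Continuous fun u => φ (G u / F u) := by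
    refine hφc.comp_continuous (hGc.div hFc fun u => (hFpos u).ne') ?_
    exact fun u => Set.mem_Ioi.mpr (div_pos (hGpos u) (hFpos u))
  have hD1c : Continuous fun u =>
      (φ (G u / F u) - 1) * F u ^ p - c * ((G u - F u) * F u ^ (p-1)) := by
    have hFp : Continuous fun u => F u ^ p := hFc.rpow_const fun u => Or.inl (hFpos u).ne'
    have hFp1 : Continuous fun u => (G u - F u) * F u ^ (p-1) :=
      (hGc.sub hFc).mul (hFc.rpow_const fun u => Or.inl (hFpos u).ne')
    exact ((hφGF.sub continuous_const).mul hFp).sub (continuous_const.mul hFp1)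
  have hD1nn : ∀ u, 0 ≤ (φ (G u / F u) - 1) * F u ^ p - c * ((G u - F u) * F u ^ (p-1)) := by
    intro u
    have ht : 0 < G u / F u := div_pos (hGpos u) (hFpos u)
    have h1 := hsupp _ ht
    have h2 : 0 < F u ^ p := Real.rpow_pos_of_pos (hFpos u) p
    have hne := (hFpos u).ne'
    have h := Real.rpow_add_one hne (p-1)
    rw [show p - 1 + 1 = p from by ring] at h
    have hid : (G u - F u) * F u ^ (p-1) = (G u / F u - 1) * F u ^ p := by
      rw [h]; field_simp
    rw [hid]; nlinarith
  have hall := zero_of_integral_zero hn hD1c hD1nn hD1zero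
  intro u
  by_contra hne
  have ht : 0 < G u / F u := div_pos (hGpos u) (hFpos u)
  have ht1 : G u / F u ≠ 1 := by
    intro hh
    rw [div_eq_one_iff_eq (hFpos u).ne'] at hh
    exact hne hh.symm
  have h1 := hsupp' _ ht ht1
  have h2 : 0 < F u ^ p := Real.rpow_pos_of_pos (hFpos u) p
  have hEq := hall u
  have hfe := (hFpos u).ne'
  have h := Real.rpow_add_one hfe (p-1)
  rw [show p - 1 + 1 = p from by ring] at h
  have hid : (G u - F u) * F u ^ (p-1) = (G u / F u - 1) * F u ^ p := by
    rw [h]; field_simp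
  rw [hid] at hEq
  nlinarith

/-- Uniqueness: if `A_{φ,i}(Q,K) = A_{φ,i}(Q,L)` for all `Q ∈ ℳ`, then `K` and
`L` have the same half-width function. -/
theorem orliczMixedWidthIntegral_unique_left {n : ℕ} (hn : 2 ≤ n) (i : ℕ) (hi : i < n)
    (φ : ℝ → ℝ) (hφ : IsOrliczPhi φ) (hstrict : StrictConvexOn ℝ (Set.Ioi (0 : ℝ)) φ)
    (M : Set (Set (Euc n))) (hM : ∀ Q ∈ M, IsConvexBody Q)
    (K L : Set (Euc n)) (hKM : K ∈ M) (hLM : L ∈ M)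
    (h : ∀ Q ∈ M, orliczMixedWidthIntegral n i φ Q K = orliczMixedWidthIntegral n i φ Q L) :
    ∀ u : Euc n, ‖u‖ = 1 → halfWidth K u = halfWidth L u := by
  have hK := hM K hKM
  have hL := hM L hLM
  have hp1 : 1 ≤ (n : ℝ) - i := by
    have : (i : ℝ) + 1 ≤ (n : ℝ) := by exact_mod_cast hi
    linarith
  obtain ⟨c, hc, hsupp, hsupp'⟩ :=
    exists_support_slope hφ.convexOn hstrict hφ.strictAntiOn hφ.one
  have hφc : ContinuousOn φ (Set.Ioi 0) := hφ.convexOn.continuousOn isOpen_Ioi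
  have hn0 : (1 / (n : ℝ)) ≠ 0 := by
    have : (0 : ℝ) < n := by exact_mod_cast (by omega : 0 < n)
    positivity
  have hunit : ∀ u : sphere (0 : Euc n) 1, ‖(u : Euc n)‖ = 1 :=
    fun u => mem_sphere_zero_iff_norm.mp u.2
  have hFpos : ∀ u : sphere (0 : Euc n) 1, 0 < halfWidth K (u : Euc n) :=
    fun u => halfWidth_pos hK (hunit u)
  have hGpos : ∀ u : sphere (0 : Euc n) 1, 0 < halfWidth L (u : Euc n) :=
    fun u => halfWidth_pos hL (hunit u)
  have hFc : Continuous fun u : sphere (0 : Euc n) 1 => halfWidth K (u : Euc n) :=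
    (halfWidth_continuous hK).comp continuous_subtype_val
  have hGc : Continuous fun u : sphere (0 : Euc n) 1 => halfWidth L (u : Euc n) :=
    (halfWidth_continuous hL).comp continuous_subtype_val
  -- derive the two integral identities
  have e1' := h K hKM
  have e2' := h L hLM
  simp only [orliczMixedWidthIntegral] at e1' e2'
  have hKK : ∫ u : sphere (0 : Euc n) 1,
      φ (halfWidth K (u : Euc n) / halfWidth K (u : Euc n)) *
        halfWidth K (u : Euc n) ^ ((n : ℝ) - i) ∂(sphMeasure n)
      = ∫ u : sphere (0 : Euc n) 1,
        halfWidth K (u : Euc n) ^ ((n : ℝ) - i) ∂(sphMeasure n) := by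
    refine integral_congr_ae (Eventually.of_forall fun u => ?_)
    simp only [div_self (hFpos u).ne', hφ.one, one_mul]
  have hLL : ∫ u : sphere (0 : Euc n) 1,
      φ (halfWidth L (u : Euc n) / halfWidth L (u : Euc n)) *
        halfWidth L (u : Euc n) ^ ((n : ℝ) - i) ∂(sphMeasure n)
      = ∫ u : sphere (0 : Euc n) 1,
        halfWidth L (u : Euc n) ^ ((n : ℝ) - i) ∂(sphMeasure n) := by
    refine integral_congr_ae (Eventually.of_forall fun u => ?_)
    simp only [div_self (hGpos u).ne', hφ.one, one_mul]
  have e1 : ∫ u : sphere (0 : Euc n) 1,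
      φ (halfWidth L (u : Euc n) / halfWidth K (u : Euc n)) *
        halfWidth K (u : Euc n) ^ ((n : ℝ) - i) ∂(sphMeasure n)
      = ∫ u : sphere (0 : Euc n) 1,
        halfWidth K (u : Euc n) ^ ((n : ℝ) - i) ∂(sphMeasure n) :=
    (mul_left_cancel₀ hn0 e1').symm.trans hKK
  have e2 : ∫ u : sphere (0 : Euc n) 1,
      φ (halfWidth K (u : Euc n) / halfWidth L (u : Euc n)) *
        halfWidth L (u : Euc n) ^ ((n : ℝ) - i) ∂(sphMeasure n)
      = ∫ u : sphere (0 : Euc n) 1,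
        halfWidth L (u : Euc n) ^ ((n : ℝ) - i) ∂(sphMeasure n) :=
    (mul_left_cancel₀ hn0 e2').trans hLL
  have hmain := main_aux hn hp1 hφc hc hsupp hsupp' hFc hGc hFpos hGpos e1 e2
  intro u hu
  exact hmain ⟨u, mem_sphere_zero_iff_norm.mpr hu⟩


end
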